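/- For n ≥ 4, the Apollonian group A_n = ⟨S_1, ..., S_{n+2}⟩ is a free product of n+2 copies of ℤ/2ℤ: no nonempty product S_{j_1}S_{j_2}···S_{j_k} with consecutive indices distinct equals the identity matrix. -/

import Mathlib

open Matrix

/-- Descartes quadratic form matrix in dimension `n`. -/
noncomputable def QD (n : ℕ) : Matrix (Fin (n+2)) (Fin (n+2)) ℝ :=
  1 - (n : ℝ)⁻¹ • Matrix.of (fun _ _ => (1 : ℝ))

/-- Wilker quadratic form matrix in dimension `n`. -/
def QW (n : ℕ) : Matrix (Fin (n+2)) (Fin (n+2)) ℝ :=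
  Matrix.of (fun i j =>
    if (i = 0 ∧ j = 1) ∨ (i = 1 ∧ j = 0) then (-4 : ℝ)
    else if i = j then (if 2 ≤ (i : ℕ) then 2 else 0) else 0)

/-- Apollonian group generator `S j` in dimension `n`. -/
noncomputable def S (n : ℕ) (j : Fin (n+2)) : Matrix (Fin (n+2)) (Fin (n+2)) ℝ :=
  Matrix.of (fun i k =>
    if i = j then (if k = j then -1 else 2 / ((n : ℝ) - 1))
    else if i = k then 1 else 0)

/-- Dual Apollonian group generator `S j ^⊥` in dimension `n`. -/
def Sperp (n : ℕ) (j : Fin (n+2)) : Matrix (Fin (n+2)) (Fin (n+2)) ℝ :=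
  Matrix.of (fun i k =>
    if k = j then (if i = j then -1 else 2)
    else if i = k then 1 else 0)

/-
Each `S j` is the identity except for row `j`, which is `(c, …, c, -1, c, …, c)` with
`c = 2 / (n - 1)`. For `n ≥ 4` the integer `n - 1 ≥ 3` does not divide `2`, so some prime `p`
has `|c|_p > 1`. Over `ℚ_[p]` this gives an ultrametric ping-pong: if the entries of `P` are
bounded by `|c|^(m+1)`, attained in row `j₁`, and the other rows are bounded by `|c|^m`, then for
`j₀ ≠ j₁` the row `j₀` of `S j₀ * P` is dominated by the single term `c • (row j₁ of P)`, and the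
pattern persists with `j₀` in place of `j₁` and `m + 1` in place of `m`. A reduced word of length
`k` therefore has an entry of norm `|c|_p ^ k > 1`, so it is not the identity; since the matrices
are rational, the same word is not the identity over `ℝ` either.
-/

open Finset IsUltrametricDist

def IsReducedWord {ι : Type*} (j : ℕ → ι) (k : ℕ) : Prop :=
  ∀ i, i + 1 < k → j i ≠ j (i + 1)

section Word

variable {R ι : Type*} [Ring R] [DecidableEq ι]

def descartesReflection (c : R) (j : ι) : Matrix ι ι R :=
  Matrix.of fun a b => if a = j then (if b = j then -1 else c) else if a = b then 1 else 0

lemma descartesReflection_apply_self_of_ne (c : R) {j b : ι} (h : b ≠ j) :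
    descartesReflection c j j b = c := by
  simp [descartesReflection, h]

variable [Fintype ι]

lemma descartesReflection_mul_apply_of_ne (c : R) {a j : ι} (h : a ≠ j) (P : Matrix ι ι R)
    (b : ι) : (descartesReflection c j * P) a b = P a b := by
  simp [descartesReflection, mul_apply, h]

def reflectionWord (c : R) (j : ℕ → ι) (k : ℕ) : Matrix ι ι R :=
  ((List.range k).map fun i => descartesReflection c (j i)).prod

lemma reflectionWord_zero (c : R) (j : ℕ → ι) : reflectionWord c j 0 = 1 := rfl

lemma reflectionWord_succ (c : R) (j : ℕ → ι) (k : ℕ) :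
    reflectionWord c j (k + 1) =
      descartesReflection c (j 0) * reflectionWord c (fun i => j (i + 1)) k :=
  List.prod_range_succ' _ _

lemma map_reflectionWord {T : Type*} [Ring T] (f : R →+* T) (c : R) (j : ℕ → ι) (k : ℕ) :
    (reflectionWord c j k).map f = reflectionWord (f c) j k := by
  rw [← RingHom.mapMatrix_apply, reflectionWord, map_list_prod, List.map_map]
  congr 1
  refine List.map_congr_left fun i _ => ?_
  ext a b
  simp only [Function.comp_apply, RingHom.mapMatrix_apply, map_apply, descartesReflection,
    of_apply]
  split_ifs <;> simp

end Word

section Ultrametric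

variable {K ι : Type*} [NormedField K] [DecidableEq ι] {c : K}

structure LeadingRow (r : ℝ) (m : ℕ) (a₀ : ι) (P : Matrix ι ι K) : Prop where
  norm_le : ∀ a b, ‖P a b‖ ≤ r ^ (m + 1)
  norm_le_of_ne : ∀ a, a ≠ a₀ → ∀ b, ‖P a b‖ ≤ r ^ m
  exists_norm_eq : ∃ b, ‖P a₀ b‖ = r ^ (m + 1)

lemma norm_descartesReflection_apply_le (hc : 1 ≤ ‖c‖) (j a b : ι) :
    ‖descartesReflection c j a b‖ ≤ ‖c‖ := by
  simp only [descartesReflection, of_apply]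
  split_ifs <;> simp [hc]

lemma leadingRow_descartesReflection [Nontrivial ι] (hc : 1 ≤ ‖c‖) (j : ι) :
    LeadingRow ‖c‖ 0 j (descartesReflection c j) where
  norm_le a b := by simpa using norm_descartesReflection_apply_le hc j a b
  norm_le_of_ne a ha b := by
    simp only [descartesReflection, of_apply, if_neg ha]
    split_ifs <;> simp
  exists_norm_eq := by
    obtain ⟨b, hb⟩ := exists_ne j
    exact ⟨b, by rw [descartesReflection_apply_self_of_ne c hb, zero_add, pow_one]⟩

variable [Fintype ι] [IsUltrametricDist K]

lemma LeadingRow.descartesReflection_mul (hc : 1 < ‖c‖) {m : ℕ} {j₀ j₁ : ι}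
    {P : Matrix ι ι K} (hP : LeadingRow ‖c‖ m j₁ P) (hj : j₀ ≠ j₁) :
    LeadingRow ‖c‖ (m + 1) j₀ (descartesReflection c j₀ * P) := by
  set r := ‖c‖
  have hterm (i b : ι) : ‖descartesReflection c j₀ j₀ i * P i b‖ ≤ r * ‖P i b‖ := by
    rw [norm_mul]
    exact mul_le_mul_of_nonneg_right (norm_descartesReflection_apply_le hc.le j₀ j₀ i)
      (norm_nonneg _)
  refine ⟨fun a b => ?_, fun a ha b => ?_, ?_⟩
  · by_cases ha : a = j₀
    · subst ha
      refine norm_sum_le_of_forall_le_of_nonneg (by positivity) fun i _ => (hterm i b).trans ?_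
      rw [pow_succ' r (m + 1)]
      exact mul_le_mul_of_nonneg_left (hP.norm_le i b) (by positivity)
    · rw [descartesReflection_mul_apply_of_ne c ha]
      exact (hP.norm_le a b).trans (pow_le_pow_right₀ hc.le (by omega))
  · rw [descartesReflection_mul_apply_of_ne c ha]
    exact hP.norm_le a b
  · obtain ⟨b, hb⟩ := hP.exists_norm_eq
    have hlead : ‖c * P j₁ b‖ = r ^ (m + 1 + 1) := by rw [norm_mul, hb, pow_succ' r (m + 1)]
    have hrest :
        ‖∑ i ∈ univ.erase j₁, descartesReflection c j₀ j₀ i * P i b‖ < r ^ (m + 1 + 1) := by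
      refine lt_of_le_of_lt ?_ (pow_lt_pow_right₀ hc (by omega : m + 1 < m + 1 + 1))
      refine norm_sum_le_of_forall_le_of_nonneg (by positivity) fun i hi => (hterm i b).trans ?_
      rw [pow_succ' r m]
      exact mul_le_mul_of_nonneg_left (hP.norm_le_of_ne i (ne_of_mem_erase hi) b) (by positivity)
    refine ⟨b, ?_⟩
    rw [mul_apply, ← add_sum_erase _ _ (mem_univ j₁),
      descartesReflection_apply_self_of_ne c hj.symm,
      norm_add_eq_max_of_norm_ne_norm (by rw [hlead]; exact hrest.ne'), hlead,
      max_eq_left hrest.le]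

lemma leadingRow_reflectionWord [Nontrivial ι] (hc : 1 < ‖c‖) (ℓ : ℕ) {j : ℕ → ι}
    (hj : IsReducedWord j (ℓ + 1)) : LeadingRow ‖c‖ ℓ (j 0) (reflectionWord c j (ℓ + 1)) := by
  induction ℓ generalizing j with
  | zero => simpa [reflectionWord_succ, reflectionWord_zero] using
      leadingRow_descartesReflection hc.le (j 0)
  | succ ℓ ih =>
    rw [reflectionWord_succ]
    exact (ih fun i hi => hj (i + 1) (by omega)).descartesReflection_mul hc (hj 0 (by omega))

theorem reflectionWord_ne_one [Nontrivial ι] (hc : 1 < ‖c‖) {j : ℕ → ι} {k : ℕ} (hk : 0 < k)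
    (hj : IsReducedWord j k) : reflectionWord c j k ≠ 1 := by
  obtain ⟨ℓ, rfl⟩ : ∃ ℓ, k = ℓ + 1 := ⟨k - 1, by omega⟩
  intro h
  obtain ⟨b, hb⟩ := (leadingRow_reflectionWord hc ℓ hj).exists_norm_eq
  have hone : ‖(1 : Matrix ι ι K) (j 0) b‖ ≤ 1 := by
    rw [one_apply]
    split_ifs <;> simp
  rw [← h, hb] at hone
  exact (one_lt_pow₀ hc (by omega)).not_ge hone

end Ultrametric

theorem exists_one_lt_padicNorm_div {a b : ℕ} (ha : a ≠ 0) (hb : b ≠ 0) (hab : ¬ b ∣ a) :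
    ∃ p, ∃ _ : Fact p.Prime, 1 < ‖((a / b : ℚ) : ℚ_[p])‖ := by
  rw [← Nat.factorization_le_iff_dvd hb ha, Finsupp.le_def, not_forall] at hab
  obtain ⟨p, hp⟩ := hab
  have hpp : p.Prime :=
    Nat.prime_of_mem_primeFactors ((Finsupp.mem_support_iff (f := b.factorization)).2 (by omega))
  have := Fact.mk hpp
  refine ⟨p, this, ?_⟩
  rw [Nat.factorization_def _ hpp, Nat.factorization_def _ hpp] at hp
  rw [Padic.eq_padicNorm, padicNorm.eq_zpow_of_nonzero (by positivity),
    padicValRat.div (by positivity) (by positivity), padicValRat.of_nat, padicValRat.of_nat]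
  have hv : 0 < -((padicValNat p a : ℤ) - padicValNat p b) := by omega
  exact_mod_cast one_lt_zpow₀ (by exact_mod_cast hpp.one_lt : (1 : ℚ) < p) hv

theorem apollonian_free_product (n : ℕ) (hn : 4 ≤ n)
    (k : ℕ) (hk : 0 < k) (j : ℕ → Fin (n+2))
    (hred : ∀ i : ℕ, i + 1 < k → j i ≠ j (i + 1)) :
    ((List.range k).map (fun i => S n (j i))).prod ≠ 1 := by
  obtain ⟨p, _, hp⟩ := exists_one_lt_padicNorm_div (a := 2) (b := n - 1) two_ne_zero (by omega)
    fun h => by have := Nat.le_of_dvd two_pos h; omega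
  set c : ℚ := ((2 : ℕ) : ℚ) / ((n - 1 : ℕ) : ℚ)
  have hcR : Rat.castHom ℝ c = 2 / ((n : ℝ) - 1) := by
    simp [c, Nat.cast_sub (by omega : 1 ≤ n)]
  have hS : ((List.range k).map fun i => S n (j i)).prod =
      (reflectionWord c j k).map (Rat.castHom ℝ) := by
    rw [map_reflectionWord, hcR]
    rfl
  intro h
  have hq : reflectionWord c j k = 1 :=
    Matrix.map_injective (f := ((↑) : ℚ → ℝ)) Rat.cast_injective <|
      (hS.symm.trans h).trans (Matrix.map_one _ Rat.cast_zero Rat.cast_one).symm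
  have hp1 := map_reflectionWord (Rat.castHom ℚ_[p]) c j k
  rw [hq, Matrix.map_one _ (map_zero _) (map_one _)] at hp1
  exact reflectionWord_ne_one hp hk hred hp1.symm
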